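/- arXiv:1512.01623 — 7 statements merged into one kernel-verified Lean document; each statement's English description precedes it below -/
import Mathlib

section
/- For every natural number n, ∫_ℝ xⁿ e^{-x²/2} dx = √(2π) · Dⁿ(e^{J²/2})|_{J=0}, where Dⁿ(e^{J²/2})|_{J=0} denotes the n-th derivative of the function J ↦ exp(J²/2) evaluated at J = 0. -/
open MeasureTheory Real

private lemma gauss_integrable (k : ℕ) :
    Integrable (fun x : ℝ => x ^ k * Real.exp (-x ^ 2 / 2)) := by
  have h := integrable_rpow_mul_exp_neg_mul_sq (b := 1/2) (by norm_num) (s := (k : ℝ))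
    (by exact lt_of_lt_of_le (by norm_num) (Nat.cast_nonneg k))
  refine h.congr (Filter.Eventually.of_forall fun x => ?_)
  show x ^ (k : ℝ) * _ = _
  rw [Real.rpow_natCast]
  ring_nf

private lemma gauss_hasDerivAt (x : ℝ) :
    HasDerivAt (fun x : ℝ => Real.exp (-x ^ 2 / 2)) (-x * Real.exp (-x ^ 2 / 2)) x := by
  have h1 : HasDerivAt (fun x : ℝ => -x ^ 2 / 2) (-x) x := by
    have := ((hasDerivAt_pow 2 x).neg).div_const 2
    simpa using this.congr_deriv (by ring)
  simpa [Function.comp_def, mul_comm] using (Real.hasDerivAt_exp (-x ^ 2 / 2)).comp x h1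

/-- The integral recursion: I(n+2) = (n+1) I(n). -/
private lemma gauss_rec (n : ℕ) :
    ∫ x : ℝ, x ^ (n + 2) * Real.exp (-x ^ 2 / 2) =
      (n + 1) * ∫ x : ℝ, x ^ n * Real.exp (-x ^ 2 / 2) := by
  have hu : ∀ x : ℝ, HasDerivAt (fun x : ℝ => x ^ (n + 1)) (((n : ℝ) + 1) * x ^ n) x := by
    intro x
    simpa using (hasDerivAt_pow (n + 1) x)
  have hv := gauss_hasDerivAt
  have key := integral_mul_deriv_eq_deriv_mul_of_integrable
    (u := fun x : ℝ => x ^ (n + 1)) (v := fun x : ℝ => Real.exp (-x ^ 2 / 2))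
    (u' := fun x : ℝ => ((n : ℝ) + 1) * x ^ n)
    (v' := fun x : ℝ => -x * Real.exp (-x ^ 2 / 2))
    (fun x _ => hu x) (fun x _ => hv x)
    (by
      have := (gauss_integrable (n + 2)).neg
      refine this.congr (Filter.Eventually.of_forall fun x => ?_)
      simp only [Pi.mul_apply, Pi.neg_apply]; ring)
    (by
      have := (gauss_integrable n).const_mul ((n : ℝ) + 1)
      refine this.congr (Filter.Eventually.of_forall fun x => ?_)
      simp only [Pi.mul_apply]; ring)
    (by
      have := gauss_integrable (n + 1)
      refine this.congr (Filter.Eventually.of_forall fun x => ?_)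
      simp only [Pi.mul_apply])
  have h1 : ∫ x : ℝ, x ^ (n + 1) * (-x * Real.exp (-x ^ 2 / 2)) =
      - ∫ x : ℝ, x ^ (n + 2) * Real.exp (-x ^ 2 / 2) := by
    rw [← integral_neg]
    congr 1; funext x; ring
  have h2 : ∫ x : ℝ, ((n : ℝ) + 1) * x ^ n * Real.exp (-x ^ 2 / 2) =
      ((n : ℝ) + 1) * ∫ x : ℝ, x ^ n * Real.exp (-x ^ 2 / 2) := by
    rw [← integral_const_mul]
    congr 1; funext x; ring
  rw [h1, h2] at key
  linarith [key]

private lemma f_contDiff : ContDiff ℝ (⊤ : ℕ∞) (fun J : ℝ => Real.exp (J ^ 2 / 2)) :=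
  Real.contDiff_exp.comp ((contDiff_id.pow 2).div_const 2)

private lemma f_deriv :
    deriv (fun J : ℝ => Real.exp (J ^ 2 / 2)) = fun x => x * Real.exp (x ^ 2 / 2) := by
  funext x
  have h1 : HasDerivAt (fun x : ℝ => x ^ 2 / 2) x x := by
    have := (hasDerivAt_pow 2 x).div_const 2
    simpa using this.congr_deriv (by ring)
  have h2 : HasDerivAt (fun J : ℝ => Real.exp (J ^ 2 / 2)) (x * Real.exp (x ^ 2 / 2)) x := by
    simpa [Function.comp_def, mul_comm] using (Real.hasDerivAt_exp (x ^ 2 / 2)).comp x h1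
  rw [h2.deriv]

private lemma f_iter_diff (n : ℕ) :
    Differentiable ℝ (iteratedDeriv n (fun J : ℝ => Real.exp (J ^ 2 / 2))) := by
  exact f_contDiff.differentiable_iteratedDeriv n (by exact WithTop.coe_lt_coe.mpr (ENat.coe_lt_top n))

/-- Leibniz recursion for iterated derivatives of exp(J²/2). -/
private lemma iter_rec (n : ℕ) :
    iteratedDeriv (n + 2) (fun J : ℝ => Real.exp (J ^ 2 / 2)) =
      fun x => x * iteratedDeriv (n + 1) (fun J : ℝ => Real.exp (J ^ 2 / 2)) x +
        ((n : ℝ) + 1) * iteratedDeriv n (fun J : ℝ => Real.exp (J ^ 2 / 2)) x := by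
  set f : ℝ → ℝ := fun J : ℝ => Real.exp (J ^ 2 / 2) with hf_def
  have hD : ∀ (m : ℕ) (x : ℝ),
      HasDerivAt (iteratedDeriv m f) (iteratedDeriv (m + 1) f x) x := by
    intro m x
    rw [iteratedDeriv_succ]
    exact ((f_iter_diff m) x).hasDerivAt
  induction n with
  | zero =>
    funext x
    have hf : HasDerivAt f (x * f x) x := by
      have h := hD 0 x
      simpa only [iteratedDeriv_zero, zero_add, iteratedDeriv_one, hf_def, f_deriv] using h
    have h1 : HasDerivAt (fun y : ℝ => y * f y) (1 * f x + x * (x * f x)) x :=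
      (hasDerivAt_id x).mul hf
    have h2 : iteratedDeriv 2 f x = deriv (fun y : ℝ => y * f y) x := by
      rw [show (2 : ℕ) = 1 + 1 from rfl, iteratedDeriv_succ, iteratedDeriv_one, f_deriv]
    rw [h2, h1.deriv, iteratedDeriv_one, f_deriv, iteratedDeriv_zero]
    push_cast
    ring
  | succ k ih =>
    funext x
    have h1 : HasDerivAt (fun y : ℝ => y * iteratedDeriv (k + 1) f y)
        (1 * iteratedDeriv (k + 1) f x + x * iteratedDeriv (k + 2) f x) x :=
      (hasDerivAt_id x).mul (hD (k + 1) x)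
    have h2 : HasDerivAt (fun y : ℝ => ((k : ℝ) + 1) * iteratedDeriv k f y)
        (((k : ℝ) + 1) * iteratedDeriv (k + 1) f x) x :=
      (hD k x).const_mul _
    have h3 : HasDerivAt (fun y : ℝ => y * iteratedDeriv (k + 1) f y +
          ((k : ℝ) + 1) * iteratedDeriv k f y) _ x := h1.add h2
    have h4 : iteratedDeriv (k + 1 + 2) f x =
        deriv (fun y : ℝ => y * iteratedDeriv (k + 1) f y +
          ((k : ℝ) + 1) * iteratedDeriv k f y) x := by
      rw [show k + 1 + 2 = (k + 2) + 1 from rfl, iteratedDeriv_succ, ih]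
    rw [h4, h3.deriv]
    push_cast
    ring

theorem gaussian_moments_eq_iterated_deriv (n : ℕ) :
    ∫ x : ℝ, x ^ n * Real.exp (-x ^ 2 / 2) =
      Real.sqrt (2 * Real.pi) *
        iteratedDeriv n (fun J : ℝ => Real.exp (J ^ 2 / 2)) 0 := by
  induction n using Nat.twoStepInduction with
  | zero =>
    simp only [pow_zero, one_mul, iteratedDeriv_zero]
    rw [show (fun x : ℝ => Real.exp (-x ^ 2 / 2)) = fun x : ℝ => Real.exp (-(1/2) * x ^ 2) by
      funext x; ring_nf]
    rw [integral_gaussian]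
    norm_num
    ring
  | one =>
    have hodd : ∫ x : ℝ, x ^ 1 * Real.exp (-x ^ 2 / 2) = 0 := by
      have h := integral_neg_eq_self (fun x : ℝ => x ^ 1 * Real.exp (-x ^ 2 / 2))
        (volume : Measure ℝ)
      simp only [pow_one, neg_sq] at h ⊢
      have : ∫ x : ℝ, -x * Real.exp (-x ^ 2 / 2) =
          - ∫ x : ℝ, x * Real.exp (-x ^ 2 / 2) := by
        rw [← integral_neg]; congr 1; funext x; ring_nf
      rw [this] at h
      linarith
    rw [hodd, iteratedDeriv_one, f_deriv]
    simp
  | more n ih _ =>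
    rw [gauss_rec n, ih, iter_rec n]
    push_cast
    simp only [zero_mul, zero_add]
    ring
end

section
/- Let Z(J) = ∫_ℝ e^{-x²/2 + Jx} dx. For every natural number n, the function Z is n times differentiable and its n-th derivative at J = 0 equals ∫_ℝ xⁿ e^{-x²/2} dx (differentiation under the integral sign for the Gaussian generating function). -/
/-! Up to the factor `√(2π)`, `Z` is the moment generating function of the standard Gaussian,
which is finite on all of `ℝ`; the derivatives of a moment generating function at an interior
point of its domain are computed under the integral sign, giving the Gaussian moments at `0`. -/

open MeasureTheory ProbabilityTheory Real

lemma integral_mul_exp_neg_sq_div_two (g : ℝ → ℝ) :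
    ∫ x, g x * exp (-x ^ 2 / 2) = √(2 * π) * ∫ x, g x ∂gaussianReal 0 1 := by
  rw [integral_gaussianReal_eq_integral_smul one_ne_zero, ← integral_const_mul]
  congr 1 with x
  have hsqrt : √(2 * π) ≠ 0 := by positivity
  simp only [gaussianPDFReal, NNReal.coe_one, mul_one, sub_zero, smul_eq_mul]
  field_simp

theorem gaussian_generating_function_deriv (n : ℕ)
    (Z : ℝ → ℝ) (hZ : ∀ J : ℝ, Z J = ∫ x : ℝ, Real.exp (-x ^ 2 / 2 + J * x)) :
    (∀ k : ℕ, k < n → Differentiable ℝ (iteratedDeriv k Z)) ∧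
      iteratedDeriv n Z 0 = ∫ x : ℝ, x ^ n * Real.exp (-x ^ 2 / 2) := by
  have hZ_mgf : Z = fun J ↦ √(2 * π) * mgf id (gaussianReal 0 1) J := by
    funext J
    rw [hZ, mgf, ← integral_mul_exp_neg_sq_div_two]
    simp only [id, ← exp_add, add_comm]
  refine ⟨fun k _ ↦ ?_, ?_⟩
  · have hZ_smooth : ContDiff ℝ ⊤ Z := by
      rw [hZ_mgf, mgf_id_gaussianReal]
      fun_prop
    exact hZ_smooth.differentiable_iteratedDeriv k (WithTop.coe_lt_top _)
  · rw [hZ_mgf, iteratedDeriv_const_mul_field,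
      iteratedDeriv_mgf_zero (by simp [integrableExpSet_id_gaussianReal]),
      ← integral_mul_exp_neg_sq_div_two]
    rfl
end

section
/- If f : ℝ → ℝ is continuous and Lebesgue integrable, then for every real constant J the translate x ↦ f(x + J) satisfies f(· + J) ∼ f; that is, the integral-as-equivalence-class is translation invariant: ∫ f(x + J) = ∫ f(x). -/
/-- A function `h : ℝ → ℝ` vanishes at infinity if `h x → 0` as `x → +∞` and as `x → -∞`. -/
def VanishesAtInfinity (h : ℝ → ℝ) : Prop :=
  Filter.Tendsto h Filter.atTop (nhds 0) ∧ Filter.Tendsto h Filter.atBot (nhds 0)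

/-- `f ∼ g` iff there is a differentiable `h` vanishing at infinity with `h' = f - g`. -/
def IntSim (f g : ℝ → ℝ) : Prop :=
  ∃ h : ℝ → ℝ, Differentiable ℝ h ∧ VanishesAtInfinity h ∧ ∀ x, deriv h x = f x - g x

/-- `f` is rapidly vanishing at infinity if it is smooth and all of its iterated
derivatives vanish at infinity. -/
def RapidlyVanishing (f : ℝ → ℝ) : Prop :=
  ContDiff ℝ (⊤ : ℕ∞) f ∧ ∀ n : ℕ, VanishesAtInfinity (iteratedDeriv n f)

theorem intSim_translation_invariant (f : ℝ → ℝ)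
    (hcont : Continuous f) (hint : MeasureTheory.Integrable f) (J : ℝ) :
    IntSim (fun x => f (x + J)) f := by
  set F : ℝ → ℝ := fun x => ∫ t in (0:ℝ)..x, f t with hF
  have hFderiv : ∀ x, HasDerivAt F (f x) x := fun x =>
    intervalIntegral.integral_hasDerivAt_right hint.intervalIntegrable
      (hcont.stronglyMeasurableAtFilter _ _) hcont.continuousAt
  have hFdiff : Differentiable ℝ F := fun x => (hFderiv x).differentiableAt
  refine ⟨fun x => F (x + J) - F x, ?_, ?_, ?_⟩
  · exact fun x => ((hFdiff _).comp x ((differentiable_id.add_const J) x)).sub (hFdiff x)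
  · constructor
    · have h1 : Filter.Tendsto F Filter.atTop (nhds (∫ t in Set.Ioi (0:ℝ), f t)) :=
        MeasureTheory.intervalIntegral_tendsto_integral_Ioi 0 hint.integrableOn
          Filter.tendsto_id
      have h2 := (h1.comp (Filter.tendsto_atTop_add_const_right _ J Filter.tendsto_id)).sub h1
      simpa using h2
    · have h1 : Filter.Tendsto F Filter.atBot (nhds (-∫ t in Set.Iic (0:ℝ), f t)) := by
        have := MeasureTheory.intervalIntegral_tendsto_integral_Iic 0 hint.integrableOn
          (Filter.tendsto_id (x := Filter.atBot (α := ℝ)))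
        have := this.neg
        simp only [← intervalIntegral.integral_symm] at this
        exact this
      have h2 := (h1.comp (Filter.tendsto_atBot_add_const_right _ J Filter.tendsto_id)).sub h1
      simpa using h2
  · intro x
    have hd : HasDerivAt (fun x => F (x + J) - F x) (f (x + J) - f x) x := by
      have := ((hFderiv (x + J)).comp x ((hasDerivAt_id x).add_const J))
      exact (by simpa using this.sub (hFderiv x) : HasDerivAt ((F ∘ fun x => x + J) - F) (f (x + J) - f x) x)
    exact hd.deriv
end

section
/- For every real number J, the function x ↦ e^{-x²/2 + Jx} satisfies x ↦ e^{-x²/2 + Jx} ∼ x ↦ e^{J²/2}·e^{-x²/2}; consequently ∫ e^{-x²/2 + Jx} = e^{J²/2} · ∫ e^{-x²/2} as equivalence classes. -/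
open MeasureTheory Filter Set intervalIntegral
theorem intSim_gaussian_shift (J : ℝ) :
    IntSim (fun x => Real.exp (-x ^ 2 / 2 + J * x))
      (fun x => Real.exp (J ^ 2 / 2) * Real.exp (-x ^ 2 / 2)) := by
  set φ : ℝ → ℝ := fun t => Real.exp (-(t - J) ^ 2 / 2) - Real.exp (-t ^ 2 / 2) with hφ
  have hg : Integrable (fun t : ℝ => Real.exp (-t ^ 2 / 2)) := by
    have := integrable_exp_neg_mul_sq (b := 1/2) (by norm_num)
    convert this using 2 with t
    ring_nf
  have hgs : Integrable (fun t : ℝ => Real.exp (-(t - J) ^ 2 / 2)) := hg.comp_sub_right J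
  have hφi : Integrable φ := hgs.sub hg
  have hφc : Continuous φ := by fun_prop
  have htot : ∫ t, φ t = 0 := by
    rw [hφ, integral_sub hgs hg,
      integral_sub_right_eq_self (fun t : ℝ => Real.exp (-t ^ 2 / 2)) J, sub_self]
  have key : ∀ x : ℝ, HasDerivAt (fun x => Real.exp (J ^ 2 / 2) * ∫ t in Iic x, φ t)
      (Real.exp (J ^ 2 / 2) * φ x) x := by
    intro x
    have heq : (fun x : ℝ => Real.exp (J ^ 2 / 2) * ∫ t in Iic x, φ t)
        = fun x : ℝ => Real.exp (J ^ 2 / 2) * ((∫ t in Iic (0:ℝ), φ t) + ∫ t in (0:ℝ)..x, φ t) := by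
      funext y
      rw [← intervalIntegral.integral_Iic_sub_Iic hφi.integrableOn hφi.integrableOn]
      ring
    rw [heq]
    have h1 : HasDerivAt (fun y : ℝ => ∫ t in (0:ℝ)..y, φ t) (φ x) x :=
      intervalIntegral.integral_hasDerivAt_right hφi.intervalIntegrable
        (hφc.stronglyMeasurableAtFilter _ _) hφc.continuousAt
    exact ((h1.const_add _).const_mul _)
  refine ⟨fun x => Real.exp (J ^ 2 / 2) * ∫ t in Iic x, φ t, fun x => (key x).differentiableAt, ?_, ?_⟩
  · constructor
    · have := tendsto_setIntegral_of_monotone (μ := volume) (f := φ) (s := fun x : ℝ => Iic x)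
        (fun i => measurableSet_Iic) (fun a b h => Iic_subset_Iic.2 h)
        (by rw [iUnion_Iic]; exact hφi.integrableOn)
      rw [iUnion_Iic, setIntegral_univ, htot] at this
      exact (tendsto_const_nhds.mul this).congr (fun x => rfl) |>.trans_eq (by simp)
    · have := tendsto_setIntegral_of_antitone (ι := ℝᵒᵈ) (μ := volume) (f := φ)
        (s := fun x : ℝᵒᵈ => Iic (OrderDual.ofDual x))
        (fun i => measurableSet_Iic) (fun a b h => Iic_subset_Iic.2 h)
        ⟨0, hφi.integrableOn⟩
      rw [show (⋂ x : ℝᵒᵈ, Iic (OrderDual.ofDual x)) = ∅ from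
        eq_empty_iff_forall_notMem.2 fun x hx => absurd
          (mem_iInter.1 hx (OrderDual.toDual (x - 1))) (by simp)] at this
      rw [setIntegral_empty] at this
      exact tendsto_const_nhds.mul this |>.trans_eq (by simp)
  · intro x
    rw [(key x).deriv]
    simp only [hφ, mul_sub]
    rw [← Real.exp_add]
    ring_nf
end

section
/- If f, g : ℝ → ℝ are Lebesgue integrable and f ∼ g, then ∫_ℝ f(x) dx = ∫_ℝ g(x) dx; that is, the actual Lebesgue integral over ℝ is constant on the equivalence classes defining the integral-without-integration. -/
theorem lebesgue_integral_constant_on_intSim_classes (f g : ℝ → ℝ)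
    (hf : MeasureTheory.Integrable f) (hg : MeasureTheory.Integrable g)
    (hfg : IntSim f g) :
    ∫ x : ℝ, f x = ∫ x : ℝ, g x := by
  obtain ⟨h, hdiff, ⟨htop, hbot⟩, hderiv⟩ := hfg
  have key : ∫ x : ℝ, (f x - g x) = 0 := by
    have := MeasureTheory.integral_of_hasDerivAt_of_tendsto
      (f := h) (f' := fun x => f x - g x)
      (fun x => by simpa [hderiv x] using (hdiff x).hasDerivAt)
      (by exact hf.sub hg) hbot htop
    simpa using this
  have := MeasureTheory.integral_sub hf hg
  rw [this] at key
  linarith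
end

section
/- For every smooth compactly supported function φ : ℝ² → ℝ, ∫_{ℝ²} ln‖x‖ · (Δφ)(x) dx = 2π · φ(0), where Δφ denotes the Laplacian (the sum of the two pure second partial derivatives of φ). In other words, ∇² ln(z) = 2π δ(z) in the sense of distributions. -/
open MeasureTheory Real Set

noncomputable def eqE : (ℝ × ℝ) ≃L[ℝ] EuclideanSpace ℝ (Fin 2) :=
  (ContinuousLinearEquiv.finTwoArrow ℝ ℝ).symm.trans (EuclideanSpace.equiv (Fin 2) ℝ).symm

lemma eqE_apply (p : ℝ × ℝ) (i : Fin 2) : eqE p i = ![p.1, p.2] i := rfl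

lemma eqE_norm (p : ℝ × ℝ) : ‖eqE p‖ = Real.sqrt (p.1^2 + p.2^2) := by
  rw [EuclideanSpace.norm_eq]
  simp [eqE_apply, Fin.sum_univ_two, Real.norm_eq_abs, sq_abs]

lemma eqE_single0 : eqE (1, 0) = EuclideanSpace.single (0 : Fin 2) (1:ℝ) := by
  ext i
  rw [eqE_apply]
  fin_cases i <;> simp [EuclideanSpace.single_apply]

lemma eqE_single1 : eqE (0, 1) = EuclideanSpace.single (1 : Fin 2) (1:ℝ) := by
  ext i
  rw [eqE_apply]
  fin_cases i <;> simp [EuclideanSpace.single_apply]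

lemma eqE_measurePreserving : MeasurePreserving (⇑eqE) volume volume := by
  have h1 := (EuclideanSpace.volume_preserving_symm_measurableEquiv_toLp (ι := Fin 2)).symm
  have h2 := (MeasureTheory.volume_preserving_finTwoArrow ℝ).symm
  have h := h1.comp h2
  exact h

lemma integrable_of_polar {f : ℝ × ℝ → ℝ} (hf : AEStronglyMeasurable f volume)
    (hi : IntegrableOn (fun p => p.1 * f (polarCoord.symm p)) polarCoord.target) :
    Integrable f := by
  set B : ℝ × ℝ → ℝ × ℝ →L[ℝ] ℝ × ℝ := fun p =>
    LinearMap.toContinuousLinearMap (Matrix.toLin (Module.Basis.finTwoProd ℝ) (Module.Basis.finTwoProd ℝ)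
      !![Real.cos p.2, -p.1 * Real.sin p.2; Real.sin p.2, p.1 * Real.cos p.2]) with hB
  have B_det : ∀ p, (B p).det = p.1 := by
    intro p
    conv_rhs => rw [← one_mul p.1, ← cos_sq_add_sin_sq p.2]
    simp only [hB, neg_mul, LinearMap.det_toContinuousLinearMap, LinearMap.det_toLin,
      Matrix.det_fin_two_of, sub_neg_eq_add]
    ring
  have hmt : MeasurableSet polarCoord.target := polarCoord.open_target.measurableSet
  have hd : ∀ p ∈ polarCoord.target, HasFDerivWithinAt polarCoord.symm (B p) polarCoord.target p :=
    fun p _ => (hasFDerivAt_polarCoord_symm p).hasFDerivWithinAt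
  have himg : polarCoord.symm '' polarCoord.target = polarCoord.source := by
    rw [show polarCoord.target = polarCoord.symm.source from rfl]
    exact polarCoord.symm.image_source_eq_target
  have hinj : Set.InjOn polarCoord.symm polarCoord.target := polarCoord.symm.injOn
  have key := integrableOn_image_iff_integrableOn_abs_det_fderiv_smul volume hmt hd hinj f
  rw [himg] at key
  have : IntegrableOn f polarCoord.source := by
    rw [key]
    apply hi.congr_fun _ hmt
    intro p hp
    simp only
    rw [B_det p, abs_of_pos hp.1, smul_eq_mul]
  rwa [IntegrableOn, Measure.restrict_congr_set polarCoord_source_ae_eq_univ,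
    Measure.restrict_univ] at this

lemma sqrt_sq_add_sq_le (a b : ℝ) : Real.sqrt (a^2 + b^2) ≤ |a| + |b| := by
  have h : a^2 + b^2 ≤ (|a| + |b|)^2 := by nlinarith [abs_nonneg a, abs_nonneg b, sq_abs a, sq_abs b]
  calc Real.sqrt (a^2 + b^2) ≤ Real.sqrt ((|a| + |b|)^2) := Real.sqrt_le_sqrt h
    _ = |a| + |b| := Real.sqrt_sq (by positivity)

lemma abs_log_le (r : ℝ) (hr : 0 < r) : |Real.log r| ≤ r + r⁻¹ := by
  rcases le_or_gt 1 r with h | h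
  · rw [abs_of_nonneg (Real.log_nonneg h)]
    have h1 := Real.log_le_sub_one_of_pos hr
    have h2 : (0:ℝ) ≤ r⁻¹ := by positivity
    linarith
  · rw [abs_of_nonpos (Real.log_nonpos hr.le h.le)]
    have h1 : Real.log r⁻¹ ≤ r⁻¹ - 1 := Real.log_le_sub_one_of_pos (by positivity)
    rw [Real.log_inv] at h1
    linarith [hr.le]

lemma polar_sqrt (r θ : ℝ) (hr : 0 ≤ r) :
    Real.sqrt ((r * Real.cos θ)^2 + (r * Real.sin θ)^2) = r := by
  rw [show (r * Real.cos θ)^2 + (r * Real.sin θ)^2 = r^2 by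
    have := Real.sin_sq_add_cos_sq θ; nlinarith]
  exact Real.sqrt_sq hr

lemma integrable_of_polar_bound {f : ℝ × ℝ → ℝ} (hf : Measurable f)
    (R C : ℝ) (hR : 0 < R)
    (hbound : ∀ r θ : ℝ, 0 < r → r ≤ R →
      |r * f (r * Real.cos θ, r * Real.sin θ)| ≤ C)
    (hsupp : ∀ p : ℝ × ℝ, R < Real.sqrt (p.1^2 + p.2^2) → f p = 0) :
    Integrable f := by
  apply integrable_of_polar hf.aestronglyMeasurable
  set h : ℝ × ℝ → ℝ := fun p => p.1 * f (polarCoord.symm p) with hh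
  have hmeash : Measurable h := by
    apply measurable_fst.mul
    have hc : Continuous (fun p : ℝ × ℝ => polarCoord.symm p) := by
      simp only [polarCoord_symm_apply]
      fun_prop
    exact hf.comp hc.measurable
  have hvan : ∀ p : ℝ × ℝ, 0 < p.1 → R < p.1 → h p = 0 := by
    intro p hp hRp
    have hz : f (polarCoord.symm p) = 0 := by
      apply hsupp
      rw [polarCoord_symm_apply]
      dsimp only
      rw [polar_sqrt p.1 p.2 hp.le]
      exact hRp
    simp only [hh]
    rw [hz, mul_zero]
  have hsub : polarCoord.target ⊆ (Set.Ioc 0 R ×ˢ Set.Ioo (-π) π) ∪ {p : ℝ × ℝ | R < p.1} := by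
    rintro ⟨r, θ⟩ ⟨hr, hθ⟩
    rcases le_or_gt r R with hcase | hcase
    · exact Or.inl ⟨⟨hr, hcase⟩, hθ⟩
    · exact Or.inr hcase
  apply IntegrableOn.mono_set _ hsub
  apply IntegrableOn.union
  · have hfin : volume (Set.Ioc (0:ℝ) R ×ˢ Set.Ioo (-π) π) ≠ ⊤ := by
      rw [MeasureTheory.Measure.volume_eq_prod, Measure.prod_prod]
      exact (ENNReal.mul_lt_top measure_Ioc_lt_top measure_Ioo_lt_top).ne
    apply Measure.integrableOn_of_bounded hfin hmeash.aestronglyMeasurable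
    filter_upwards [ae_restrict_mem (measurableSet_Ioc.prod measurableSet_Ioo)] with p hp
    rcases hp with ⟨hp1, _⟩
    rw [Real.norm_eq_abs]
    calc |h p| = |p.1 * f (p.1 * Real.cos p.2, p.1 * Real.sin p.2)| := by
          simp only [hh, polarCoord_symm_apply]
      _ ≤ C := hbound p.1 p.2 hp1.1 hp1.2
  · have hms : MeasurableSet {p : ℝ × ℝ | R < p.1} :=
      measurableSet_lt measurable_const measurable_fst
    exact (integrableOn_zero (ε' := ℝ)).congr_fun
      (fun p hp => (hvan p (hR.trans hp) hp).symm) hms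

lemma hasDerivAt_slice1 {f : ℝ × ℝ → ℝ} (hf : Differentiable ℝ f) (s t : ℝ) :
    HasDerivAt (fun s' => f (s', t)) (fderiv ℝ f (s, t) (1, 0)) s := by
  have h1 : HasDerivAt (fun s' : ℝ => (s', t)) ((1:ℝ), (0:ℝ)) s :=
    (hasDerivAt_id s).prodMk (hasDerivAt_const s t)
  exact (hf (s, t)).hasFDerivAt.comp_hasDerivAt s h1

lemma hasDerivAt_slice2 {f : ℝ × ℝ → ℝ} (hf : Differentiable ℝ f) (s t : ℝ) :
    HasDerivAt (fun t' => f (s, t')) (fderiv ℝ f (s, t) (0, 1)) t := by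
  have h1 : HasDerivAt (fun t' : ℝ => (s, t')) ((0:ℝ), (1:ℝ)) t :=
    (hasDerivAt_const t s).prodMk (hasDerivAt_id t)
  exact (hf (s, t)).hasFDerivAt.comp_hasDerivAt t h1

lemma hasDerivAt_ray {f : ℝ × ℝ → ℝ} (hf : Differentiable ℝ f) (θ r : ℝ) :
    HasDerivAt (fun r' => f (r' * Real.cos θ, r' * Real.sin θ))
      (fderiv ℝ f (r * Real.cos θ, r * Real.sin θ) (1, 0) * Real.cos θ +
       fderiv ℝ f (r * Real.cos θ, r * Real.sin θ) (0, 1) * Real.sin θ) r := by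
  have h1 : HasDerivAt (fun r' : ℝ => (r' * Real.cos θ, r' * Real.sin θ))
      (Real.cos θ, Real.sin θ) r := by
    have ha : HasDerivAt (fun r' : ℝ => r' * Real.cos θ) (Real.cos θ) r := by
      simpa using (hasDerivAt_id r).mul_const (Real.cos θ)
    have hb : HasDerivAt (fun r' : ℝ => r' * Real.sin θ) (Real.sin θ) r := by
      simpa using (hasDerivAt_id r).mul_const (Real.sin θ)
    exact ha.prodMk hb
  have h2 := (hf _).hasFDerivAt.comp_hasDerivAt r h1
  refine h2.congr_deriv ?_
  have : (Real.cos θ, Real.sin θ) = Real.cos θ • ((1:ℝ), (0:ℝ)) + Real.sin θ • ((0:ℝ), (1:ℝ)) := by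
    simp [Prod.ext_iff]
  rw [this, map_add, (fderiv ℝ f _).map_smul, (fderiv ℝ f _).map_smul]
  simp [smul_eq_mul]
  ring

lemma contDiff_partial {f : ℝ × ℝ → ℝ} (hf : ContDiff ℝ (⊤ : ℕ∞) f) (v : ℝ × ℝ) :
    ContDiff ℝ (⊤ : ℕ∞) (fun p => fderiv ℝ f p v) :=
  (hf.fderiv_right (by simp)).clm_apply contDiff_const

lemma hcs_partial {f : ℝ × ℝ → ℝ} (hs : HasCompactSupport f) (v : ℝ × ℝ) :
    HasCompactSupport (fun p => fderiv ℝ f p v) := by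
  have h1 : HasCompactSupport (fderiv ℝ f) := hs.fderiv (𝕜 := ℝ)
  exact h1.comp_left (g := fun L : ℝ × ℝ →L[ℝ] ℝ => L v) (by simp)

/-- slice of compactly supported function has compact support -/
lemma hcs_slice1 {f : ℝ × ℝ → ℝ} (hs : HasCompactSupport f) (t : ℝ) :
    HasCompactSupport (fun s => f (s, t)) := by
  obtain ⟨R, hR0, hR⟩ := hs.exists_pos_le_norm
  apply HasCompactSupport.intro (isCompact_Icc (a := -R) (b := R))
  intro s hsR
  apply hR
  simp only [mem_Icc, not_and, not_le] at hsR
  rw [Prod.norm_def]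
  rcases le_or_gt (-R) s with h | h
  · have := hsR h
    calc R ≤ |s| := by rw [abs_of_pos (by linarith)]; linarith
      _ ≤ max ‖s‖ ‖t‖ := le_max_of_le_left (le_refl _)
  · calc R ≤ |s| := by rw [abs_of_neg (by linarith)]; linarith
      _ ≤ max ‖s‖ ‖t‖ := le_max_of_le_left (le_refl _)

lemma hcs_slice2 {f : ℝ × ℝ → ℝ} (hs : HasCompactSupport f) (s : ℝ) :
    HasCompactSupport (fun t => f (s, t)) := by
  obtain ⟨R, hR0, hR⟩ := hs.exists_pos_le_norm
  apply HasCompactSupport.intro (isCompact_Icc (a := -R) (b := R))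
  intro t htR
  apply hR
  simp only [mem_Icc, not_and, not_le] at htR
  rw [Prod.norm_def]
  rcases le_or_gt (-R) t with h | h
  · have := htR h
    calc R ≤ |t| := by rw [abs_of_pos (by linarith)]; linarith
      _ ≤ max ‖s‖ ‖t‖ := le_max_of_le_right (le_refl _)
  · calc R ≤ |t| := by rw [abs_of_neg (by linarith)]; linarith
      _ ≤ max ‖s‖ ‖t‖ := le_max_of_le_right (le_refl _)

lemma log_sqrt_eq (t : ℝ) (ht : t ≠ 0) :
    (fun s : ℝ => Real.log (Real.sqrt (s^2 + t^2))) =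
      fun s : ℝ => Real.log (s^2 + t^2) / 2 := by
  funext s
  rw [Real.log_sqrt (by positivity)]

lemma log_slice_hasDerivAt (t : ℝ) (ht : t ≠ 0) (s : ℝ) :
    HasDerivAt (fun s' : ℝ => Real.log (Real.sqrt (s'^2 + t^2))) (s / (s^2 + t^2)) s := by
  rw [log_sqrt_eq t ht]
  have hpos : (0:ℝ) < s^2 + t^2 := by positivity
  have h1 : HasDerivAt (fun s' : ℝ => s'^2 + t^2) (2*s) s := by
    simpa using ((hasDerivAt_pow 2 s).add_const (t^2))
  have h2 := (h1.log hpos.ne').div_const 2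
  refine h2.congr_deriv ?_
  ring

/-- Integration by parts for the log kernel on a horizontal line `t ≠ 0`. -/
lemma slice_IBP (t : ℝ) (ht : t ≠ 0) {v v' : ℝ → ℝ}
    (hv : ∀ s, HasDerivAt v (v' s) s) (hv'c : Continuous v') (hvc : Continuous v)
    (hcs : HasCompactSupport v) :
    ∫ s : ℝ, Real.log (Real.sqrt (s^2 + t^2)) * v' s =
      - ∫ s : ℝ, (s / (s^2 + t^2)) * v s := by
  have hpos : ∀ s : ℝ, (0:ℝ) < s^2 + t^2 := fun s => by positivity
  have huc : Continuous (fun s : ℝ => Real.log (Real.sqrt (s^2 + t^2))) := by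
    rw [log_sqrt_eq t ht]
    exact (((continuous_pow 2).add continuous_const).log (fun s => (hpos s).ne')).div_const 2
  have hu'c : Continuous (fun s : ℝ => s / (s^2 + t^2)) :=
    continuous_id.div ((continuous_pow 2).add continuous_const) (fun s => (hpos s).ne')
  have hcs' : HasCompactSupport v' := by
    have : v' = deriv v := funext fun s => ((hv s).deriv).symm
    rw [this]
    exact hcs.deriv
  exact integral_mul_deriv_eq_deriv_mul_of_integrable
    (fun s _ => log_slice_hasDerivAt t ht s) (fun s _ => hv s)
    ((huc.mul hv'c).integrable_of_hasCompactSupport (hcs'.mul_left))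
    ((hu'c.mul hvc).integrable_of_hasCompactSupport (hcs.mul_left))
    ((huc.mul hvc).integrable_of_hasCompactSupport (hcs.mul_left))

/-- get a radius beyond which (in the Euclidean norm on `ℝ × ℝ`) `g` vanishes -/
lemma exists_euclid_radius {g : ℝ × ℝ → ℝ} (hcs : HasCompactSupport g) :
    ∃ R : ℝ, 0 < R ∧ ∀ p : ℝ × ℝ, R < Real.sqrt (p.1^2 + p.2^2) → g p = 0 := by
  obtain ⟨R, hR0, hR⟩ := hcs.exists_pos_le_norm
  refine ⟨2 * R, by linarith, fun p hp => ?_⟩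
  apply hR
  rw [Prod.norm_def]
  have h1 : Real.sqrt (p.1^2 + p.2^2) ≤ |p.1| + |p.2| := sqrt_sq_add_sq_le _ _
  have h2 : |p.1| + |p.2| ≤ 2 * max ‖p.1‖ ‖p.2‖ := by
    have := le_max_left ‖p.1‖ ‖p.2‖
    have := le_max_right ‖p.1‖ ‖p.2‖
    simp only [Real.norm_eq_abs] at *
    linarith
  have : 2 * R < 2 * max ‖p.1‖ ‖p.2‖ := by linarith
  linarith
lemma integrable_log_mul {g : ℝ × ℝ → ℝ} (hg : Continuous g) (hcs : HasCompactSupport g) :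
    Integrable (fun p : ℝ × ℝ => Real.log (Real.sqrt (p.1^2 + p.2^2)) * g p) := by
  obtain ⟨R, hR0, hRs⟩ := exists_euclid_radius hcs
  obtain ⟨M, hM⟩ := hcs.exists_bound_of_continuous hg
  have hM0 : 0 ≤ M := le_trans (norm_nonneg _) (hM 0)
  have hmeas : Measurable (fun p : ℝ × ℝ => Real.log (Real.sqrt (p.1^2 + p.2^2)) * g p) := by
    apply Measurable.mul _ hg.measurable
    exact Real.measurable_log.comp (((continuous_fst.pow 2).add (continuous_snd.pow 2)).sqrt).measurable
  apply integrable_of_polar_bound hmeas R ((R^2 + 1) * M) hR0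
  · intro r θ hr hrR
    rw [polar_sqrt r θ hr.le, abs_mul, abs_mul]
    have h1 : |Real.log r| ≤ r + r⁻¹ := abs_log_le r hr
    have h2 : |g (r * Real.cos θ, r * Real.sin θ)| ≤ M := by
      have := hM (r * Real.cos θ, r * Real.sin θ); rwa [Real.norm_eq_abs] at this
    have h3 : |r| = r := abs_of_pos hr
    have h4 : r * (r + r⁻¹) = r^2 + 1 := by field_simp
    calc |r| * (|Real.log r| * |g (r * Real.cos θ, r * Real.sin θ)|)
        ≤ |r| * ((r + r⁻¹) * M) := by
          apply mul_le_mul_of_nonneg_left _ (abs_nonneg r)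
          exact mul_le_mul h1 h2 (abs_nonneg _) (by positivity)
      _ = (r^2 + 1) * M := by rw [h3, ← mul_assoc, h4]
      _ ≤ (R^2 + 1) * M := by
          apply mul_le_mul_of_nonneg_right _ hM0
          nlinarith
  · intro p hp
    rw [hRs p hp, mul_zero]

lemma integrable_kernel {g : ℝ × ℝ → ℝ} (hg : Continuous g) (hcs : HasCompactSupport g)
    (w : ℝ × ℝ) (hw : ‖w‖ ≤ 1) :
    Integrable (fun p : ℝ × ℝ => ((p.1 * w.1 + p.2 * w.2) / (p.1^2 + p.2^2)) * g p) := by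
  obtain ⟨R, hR0, hRs⟩ := exists_euclid_radius hcs
  obtain ⟨M, hM⟩ := hcs.exists_bound_of_continuous hg
  have hM0 : 0 ≤ M := le_trans (norm_nonneg _) (hM 0)
  have hmeas : Measurable (fun p : ℝ × ℝ => ((p.1 * w.1 + p.2 * w.2) / (p.1^2 + p.2^2)) * g p) := by
    apply Measurable.mul _ hg.measurable
    exact (((measurable_fst.mul measurable_const).add
      (measurable_snd.mul measurable_const))).div
      ((measurable_fst.pow_const 2).add (measurable_snd.pow_const 2))
  apply integrable_of_polar_bound hmeas R (2 * M) hR0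
  · intro r θ hr hrR
    have hrne : (r:ℝ) ≠ 0 := hr.ne'
    have hsum : (r * Real.cos θ)^2 + (r * Real.sin θ)^2 = r^2 := by
      have := Real.sin_sq_add_cos_sq θ; nlinarith
    have hw1 : |w.1| ≤ 1 := by
      have := le_max_left ‖w.1‖ ‖w.2‖
      rw [Prod.norm_def] at hw; simp only [Real.norm_eq_abs] at *; linarith
    have hw2 : |w.2| ≤ 1 := by
      have := le_max_right ‖w.1‖ ‖w.2‖
      rw [Prod.norm_def] at hw; simp only [Real.norm_eq_abs] at *; linarith
    have hcos : |Real.cos θ| ≤ 1 := abs_cos_le_one θ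
    have hsin : |Real.sin θ| ≤ 1 := abs_sin_le_one θ
    have hval : r * (((r * Real.cos θ) * w.1 + (r * Real.sin θ) * w.2) / r^2) =
        Real.cos θ * w.1 + Real.sin θ * w.2 := by
      field_simp
    rw [hsum, abs_mul]
    calc |r| * |(((r * Real.cos θ) * w.1 + (r * Real.sin θ) * w.2) / r^2) *
            g (r * Real.cos θ, r * Real.sin θ)|
        = |r * (((r * Real.cos θ) * w.1 + (r * Real.sin θ) * w.2) / r^2)| *
            |g (r * Real.cos θ, r * Real.sin θ)| := by
          rw [abs_mul, abs_mul]; ring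
      _ = |Real.cos θ * w.1 + Real.sin θ * w.2| * |g (r * Real.cos θ, r * Real.sin θ)| := by
          rw [hval]
      _ ≤ 2 * M := by
          apply mul_le_mul _ _ (abs_nonneg _) (by norm_num)
          · calc |Real.cos θ * w.1 + Real.sin θ * w.2|
                ≤ |Real.cos θ * w.1| + |Real.sin θ * w.2| := abs_add_le _ _
              _ ≤ 2 := by
                  rw [abs_mul, abs_mul]
                  nlinarith [abs_nonneg (Real.cos θ), abs_nonneg w.1,
                    abs_nonneg (Real.sin θ), abs_nonneg w.2]
          · have := hM (r * Real.cos θ, r * Real.sin θ)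
            rwa [Real.norm_eq_abs] at this
  · intro p hp
    rw [hRs p hp, mul_zero]
lemma slice_IBP' (s : ℝ) (hs : s ≠ 0) {v v' : ℝ → ℝ}
    (hv : ∀ t, HasDerivAt v (v' t) t) (hv'c : Continuous v') (hvc : Continuous v)
    (hcs : HasCompactSupport v) :
    ∫ t : ℝ, Real.log (Real.sqrt (s^2 + t^2)) * v' t =
      - ∫ t : ℝ, (t / (s^2 + t^2)) * v t := by
  have h := slice_IBP s hs hv hv'c hvc hcs
  have hc : ∀ t : ℝ, t^2 + s^2 = s^2 + t^2 := fun t => add_comm _ _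
  simp_rw [hc] at h
  exact h

lemma integrableOn_rect {W : ℝ × ℝ → ℝ} (hW : Continuous W) (R C : ℝ) (hR : 0 < R)
    (hb : ∀ p : ℝ × ℝ, |W p| ≤ C) (hv : ∀ p : ℝ × ℝ, R < p.1 → W p = 0) :
    IntegrableOn W (Set.Ioi (0:ℝ) ×ˢ Set.Ioo (-π) π) := by
  have hsub : Set.Ioi (0:ℝ) ×ˢ Set.Ioo (-π) π ⊆
      (Set.Ioc 0 R ×ˢ Set.Ioo (-π) π) ∪ {p : ℝ × ℝ | R < p.1} := by
    rintro ⟨r, θ⟩ ⟨hr, hθ⟩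
    rcases le_or_gt r R with hcase | hcase
    · exact Or.inl ⟨⟨hr, hcase⟩, hθ⟩
    · exact Or.inr hcase
  apply IntegrableOn.mono_set _ hsub
  apply IntegrableOn.union
  · have hfin : volume (Set.Ioc (0:ℝ) R ×ˢ Set.Ioo (-π) π) ≠ ⊤ := by
      rw [MeasureTheory.Measure.volume_eq_prod, Measure.prod_prod]
      exact (ENNReal.mul_lt_top measure_Ioc_lt_top measure_Ioo_lt_top).ne
    apply Measure.integrableOn_of_bounded hfin hW.aestronglyMeasurable
    filter_upwards with p
    rw [Real.norm_eq_abs]; exact hb p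
  · have hms : MeasurableSet {p : ℝ × ℝ | R < p.1} :=
      measurableSet_lt measurable_const measurable_fst
    exact (integrableOn_zero (ε' := ℝ)).congr_fun
      (fun p hp => (hv p hp).symm) hms

lemma ray_integral {ψ : ℝ × ℝ → ℝ} (hψ : ContDiff ℝ (⊤ : ℕ∞) ψ) (hcs : HasCompactSupport ψ)
    (θ : ℝ) :
    ∫ r in Set.Ioi (0:ℝ),
        (fderiv ℝ ψ (r * Real.cos θ, r * Real.sin θ) (1, 0) * Real.cos θ +
         fderiv ℝ ψ (r * Real.cos θ, r * Real.sin θ) (0, 1) * Real.sin θ)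
      = -ψ (0, 0) := by
  have hψd : Differentiable ℝ ψ := hψ.differentiable (by simp)
  set f : ℝ → ℝ := fun r => ψ (r * Real.cos θ, r * Real.sin θ) with hf
  set f' : ℝ → ℝ := fun r =>
    fderiv ℝ ψ (r * Real.cos θ, r * Real.sin θ) (1, 0) * Real.cos θ +
    fderiv ℝ ψ (r * Real.cos θ, r * Real.sin θ) (0, 1) * Real.sin θ with hf'
  have hd : ∀ r, HasDerivAt f (f' r) r := fun r => hasDerivAt_ray hψd θ r
  have hcray : Continuous (fun r : ℝ => (r * Real.cos θ, r * Real.sin θ)) := by fun_prop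
  have hsq : ∀ r : ℝ, Real.sqrt ((r * Real.cos θ)^2 + (r * Real.sin θ)^2) = |r| := by
    intro r
    rw [show (r * Real.cos θ)^2 + (r * Real.sin θ)^2 = r^2 by
      have := Real.sin_sq_add_cos_sq θ; nlinarith]
    exact Real.sqrt_sq_eq_abs r
  obtain ⟨R1, hR10, hR1⟩ := exists_euclid_radius (hcs_partial hcs ((1:ℝ),(0:ℝ)))
  obtain ⟨R2, hR20, hR2⟩ := exists_euclid_radius (hcs_partial hcs ((0:ℝ),(1:ℝ)))
  obtain ⟨R0, hR00, hR0⟩ := exists_euclid_radius hcs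
  have hvan : ∀ r : ℝ, max R1 R2 < |r| → f' r = 0 := by
    intro r hr
    have h1 := hR1 (r * Real.cos θ, r * Real.sin θ)
      (by rw [hsq]; exact lt_of_le_of_lt (le_max_left _ _) hr)
    have h2 := hR2 (r * Real.cos θ, r * Real.sin θ)
      (by rw [hsq]; exact lt_of_le_of_lt (le_max_right _ _) hr)
    simp only [hf', h1, h2, zero_mul, add_zero]
  have hf'c : Continuous f' := by
    apply Continuous.add
    · exact (((contDiff_partial hψ ((1:ℝ),(0:ℝ))).continuous).comp hcray).mul continuous_const
    · exact (((contDiff_partial hψ ((0:ℝ),(1:ℝ))).continuous).comp hcray).mul continuous_const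
  have hf'cs : HasCompactSupport f' := by
    apply HasCompactSupport.intro (isCompact_Icc (a := -(max R1 R2 + 1)) (b := max R1 R2 + 1))
    intro r hrout
    apply hvan
    simp only [Set.mem_Icc, not_and, not_le] at hrout
    have hmax : 0 < max R1 R2 := lt_of_lt_of_le hR10 (le_max_left R1 R2)
    rcases le_or_gt (-(max R1 R2 + 1)) r with h | h
    · have h2 := hrout h
      rw [abs_of_pos (by linarith)]
      linarith
    · rw [abs_of_neg (by linarith)]
      linarith
  have hint : IntegrableOn f' (Set.Ioi (0:ℝ)) :=
    (hf'c.integrable_of_hasCompactSupport hf'cs).integrableOn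
  have htop : Filter.Tendsto f Filter.atTop (nhds 0) := by
    apply Filter.Tendsto.congr' _ tendsto_const_nhds
    filter_upwards [Filter.eventually_ge_atTop (R0 + 1)] with r hr
    have : f r = 0 := by
      apply hR0
      rw [hsq, abs_of_pos (by linarith)]
      linarith
    exact this.symm
  have hcont : ContinuousWithinAt f (Set.Ici 0) 0 :=
    ((hψ.continuous).comp hcray).continuousWithinAt
  have := integral_Ioi_of_hasDerivAt_of_tendsto hcont (fun r _ => hd r) hint htop
  rw [this, hf]
  simp

/-- The second partial derivative of `φ : ℝ² → ℝ` in the `i`-th coordinate direction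
at `x`, as the second derivative of the restriction of `φ` to the line through `x`
in direction `eᵢ`. -/
noncomputable def secondPartial (φ : EuclideanSpace ℝ (Fin 2) → ℝ) (i : Fin 2)
    (x : EuclideanSpace ℝ (Fin 2)) : ℝ :=
  iteratedDeriv 2 (fun t : ℝ => φ (x + t • EuclideanSpace.single i (1 : ℝ))) 0

/-- The Laplacian of `φ : ℝ² → ℝ`: the sum of the two pure second partial derivatives. -/
noncomputable def laplacian2 (φ : EuclideanSpace ℝ (Fin 2) → ℝ)
    (x : EuclideanSpace ℝ (Fin 2)) : ℝ :=
  secondPartial φ 0 x + secondPartial φ 1 x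

theorem log_norm_fundamental_solution
    (φ : EuclideanSpace ℝ (Fin 2) → ℝ)
    (hφ : ContDiff ℝ (⊤ : ℕ∞) φ) (hsupp : HasCompactSupport φ) :
    ∫ x : EuclideanSpace ℝ (Fin 2), Real.log ‖x‖ * laplacian2 φ x =
      2 * Real.pi * φ 0 := by
  set ψ : ℝ × ℝ → ℝ := fun p => φ (eqE p) with hψdef
  have hψ : ContDiff ℝ (⊤ : ℕ∞) ψ := hφ.comp (eqE.toContinuousLinearMap.contDiff)
  have hψs : HasCompactSupport ψ := hsupp.comp_homeomorph eqE.toHomeomorph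
  have hψd : Differentiable ℝ ψ := hψ.differentiable (by simp)
  set ψ1 : ℝ × ℝ → ℝ := fun p => fderiv ℝ ψ p (1, 0) with hψ1def
  set ψ2 : ℝ × ℝ → ℝ := fun p => fderiv ℝ ψ p (0, 1) with hψ2def
  set ψ11 : ℝ × ℝ → ℝ := fun p => fderiv ℝ ψ1 p (1, 0) with hψ11def
  set ψ22 : ℝ × ℝ → ℝ := fun p => fderiv ℝ ψ2 p (0, 1) with hψ22def
  have hψ1c : ContDiff ℝ (⊤ : ℕ∞) ψ1 := contDiff_partial hψ (1, 0)
  have hψ2c : ContDiff ℝ (⊤ : ℕ∞) ψ2 := contDiff_partial hψ (0, 1)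
  have hψ1d : Differentiable ℝ ψ1 := hψ1c.differentiable (by simp)
  have hψ2d : Differentiable ℝ ψ2 := hψ2c.differentiable (by simp)
  have hψ11c : Continuous ψ11 := (contDiff_partial hψ1c (1, 0)).continuous
  have hψ22c : Continuous ψ22 := (contDiff_partial hψ2c (0, 1)).continuous
  have hψ1s : HasCompactSupport ψ1 := hcs_partial hψs (1, 0)
  have hψ2s : HasCompactSupport ψ2 := hcs_partial hψs (0, 1)
  have hψ11s : HasCompactSupport ψ11 := hcs_partial hψ1s (1, 0)
  have hψ22s : HasCompactSupport ψ22 := hcs_partial hψ2s (0, 1)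
  -- pointwise identification of the Laplacian
  have hlap : ∀ p : ℝ × ℝ, laplacian2 φ (eqE p) = ψ11 p + ψ22 p := by
    intro p
    have h0 : secondPartial φ 0 (eqE p) = ψ11 p := by
      have hfun : (fun t : ℝ => φ (eqE p + t • EuclideanSpace.single (0 : Fin 2) (1:ℝ)))
          = fun t : ℝ => (fun s => ψ (s, p.2)) (p.1 + t) := by
        funext t
        show φ _ = φ (eqE (p.1 + t, p.2))
        congr 1
        rw [← eqE_single0, ← _root_.map_smul (eqE : (ℝ × ℝ) ≃L[ℝ] EuclideanSpace ℝ (Fin 2)), ← map_add]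
        congr 1
        simp [Prod.ext_iff]
      rw [secondPartial, hfun]
      have h3 := congrFun (iteratedDeriv_comp_const_add 2 (fun s => ψ (s, p.2)) p.1) 0
      rw [h3, add_zero]
      rw [show (2:ℕ) = 1 + 1 from rfl, iteratedDeriv_succ, iteratedDeriv_one]
      have hd : deriv (fun s => ψ (s, p.2)) = fun s => ψ1 (s, p.2) := by
        funext s; exact (hasDerivAt_slice1 hψd s p.2).deriv
      rw [hd]
      have h2 := (hasDerivAt_slice1 hψ1d p.1 p.2).deriv
      rw [h2, hψ11def]
    have h1 : secondPartial φ 1 (eqE p) = ψ22 p := by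
      have hfun : (fun t : ℝ => φ (eqE p + t • EuclideanSpace.single (1 : Fin 2) (1:ℝ)))
          = fun t : ℝ => (fun u => ψ (p.1, u)) (p.2 + t) := by
        funext t
        show φ _ = φ (eqE (p.1, p.2 + t))
        congr 1
        rw [← eqE_single1, ← _root_.map_smul (eqE : (ℝ × ℝ) ≃L[ℝ] EuclideanSpace ℝ (Fin 2)), ← map_add]
        congr 1
        simp [Prod.ext_iff]
      rw [secondPartial, hfun]
      have h3 := congrFun (iteratedDeriv_comp_const_add 2 (fun u => ψ (p.1, u)) p.2) 0
      rw [h3, add_zero]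
      rw [show (2:ℕ) = 1 + 1 from rfl, iteratedDeriv_succ, iteratedDeriv_one]
      have hd : deriv (fun u => ψ (p.1, u)) = fun u => ψ2 (p.1, u) := by
        funext u; exact (hasDerivAt_slice2 hψd p.1 u).deriv
      rw [hd]
      have h2 := (hasDerivAt_slice2 hψ2d p.1 p.2).deriv
      rw [h2, hψ22def]
    rw [laplacian2, h0, h1]
  -- Step A: transfer to ℝ × ℝ
  have hA : (∫ x : EuclideanSpace ℝ (Fin 2), Real.log ‖x‖ * laplacian2 φ x)
      = ∫ p : ℝ × ℝ, Real.log (Real.sqrt (p.1^2 + p.2^2)) * (ψ11 p + ψ22 p) := by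
    rw [← eqE_measurePreserving.integral_comp eqE.toHomeomorph.measurableEmbedding
      (fun x => Real.log ‖x‖ * laplacian2 φ x)]
    apply integral_congr_ae
    filter_upwards with p
    rw [eqE_norm, hlap p]
  rw [hA]
  have hI1 : Integrable (fun p : ℝ × ℝ => Real.log (Real.sqrt (p.1^2 + p.2^2)) * ψ11 p) :=
    integrable_log_mul hψ11c hψ11s
  have hI2 : Integrable (fun p : ℝ × ℝ => Real.log (Real.sqrt (p.1^2 + p.2^2)) * ψ22 p) :=
    integrable_log_mul hψ22c hψ22s
  have hK1 : Integrable (fun p : ℝ × ℝ => (p.1 / (p.1^2 + p.2^2)) * ψ1 p) := by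
    have := integrable_kernel hψ1c.continuous hψ1s ((1:ℝ), (0:ℝ))
      (by rw [Prod.norm_def]; simp)
    simpa using this
  have hK2 : Integrable (fun p : ℝ × ℝ => (p.2 / (p.1^2 + p.2^2)) * ψ2 p) := by
    have := integrable_kernel hψ2c.continuous hψ2s ((0:ℝ), (1:ℝ))
      (by rw [Prod.norm_def]; simp)
    simpa using this
  have hsplit : ∫ p : ℝ × ℝ, Real.log (Real.sqrt (p.1^2 + p.2^2)) * (ψ11 p + ψ22 p)
      = (∫ p : ℝ × ℝ, Real.log (Real.sqrt (p.1^2 + p.2^2)) * ψ11 p)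
        + ∫ p : ℝ × ℝ, Real.log (Real.sqrt (p.1^2 + p.2^2)) * ψ22 p := by
    simp_rw [mul_add]
    exact integral_add hI1 hI2
  have hne : ∀ᵐ t : ℝ, t ≠ 0 := by
    rw [ae_iff]
    have h : {t : ℝ | ¬ t ≠ 0} = {0} := by ext t; simp
    rw [h]
    exact measure_singleton 0
  have hT1 : (∫ p : ℝ × ℝ, Real.log (Real.sqrt (p.1^2 + p.2^2)) * ψ11 p)
      = - ∫ p : ℝ × ℝ, (p.1 / (p.1^2 + p.2^2)) * ψ1 p := by
    have hae : ∀ᵐ t : ℝ, (∫ s : ℝ, Real.log (Real.sqrt (s^2 + t^2)) * ψ11 (s, t))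
        = - ∫ s : ℝ, (s / (s^2 + t^2)) * ψ1 (s, t) := by
      filter_upwards [hne] with t ht
      exact slice_IBP t ht (fun s => hasDerivAt_slice1 hψ1d s t)
        (hψ11c.comp (continuous_id.prodMk continuous_const))
        (hψ1c.continuous.comp (continuous_id.prodMk continuous_const))
        (hcs_slice1 hψ1s t)
    calc (∫ p : ℝ × ℝ, Real.log (Real.sqrt (p.1^2 + p.2^2)) * ψ11 p)
        = ∫ t : ℝ, ∫ s : ℝ, Real.log (Real.sqrt (s^2 + t^2)) * ψ11 (s, t) :=
          integral_prod_symm _ hI1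
      _ = ∫ t : ℝ, - ∫ s : ℝ, (s / (s^2 + t^2)) * ψ1 (s, t) := integral_congr_ae hae
      _ = - ∫ t : ℝ, ∫ s : ℝ, (s / (s^2 + t^2)) * ψ1 (s, t) := integral_neg _
      _ = - ∫ p : ℝ × ℝ, (p.1 / (p.1^2 + p.2^2)) * ψ1 p := by
          rw [← integral_prod_symm _ hK1]; rfl
  have hT2 : (∫ p : ℝ × ℝ, Real.log (Real.sqrt (p.1^2 + p.2^2)) * ψ22 p)
      = - ∫ p : ℝ × ℝ, (p.2 / (p.1^2 + p.2^2)) * ψ2 p := by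
    have hae : ∀ᵐ s : ℝ, (∫ t : ℝ, Real.log (Real.sqrt (s^2 + t^2)) * ψ22 (s, t))
        = - ∫ t : ℝ, (t / (s^2 + t^2)) * ψ2 (s, t) := by
      filter_upwards [hne] with s hs
      exact slice_IBP' s hs (fun t => hasDerivAt_slice2 hψ2d s t)
        (hψ22c.comp (continuous_const.prodMk continuous_id))
        (hψ2c.continuous.comp (continuous_const.prodMk continuous_id))
        (hcs_slice2 hψ2s s)
    calc (∫ p : ℝ × ℝ, Real.log (Real.sqrt (p.1^2 + p.2^2)) * ψ22 p)
        = ∫ s : ℝ, ∫ t : ℝ, Real.log (Real.sqrt (s^2 + t^2)) * ψ22 (s, t) :=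
          integral_prod _ hI2
      _ = ∫ s : ℝ, - ∫ t : ℝ, (t / (s^2 + t^2)) * ψ2 (s, t) := integral_congr_ae hae
      _ = - ∫ s : ℝ, ∫ t : ℝ, (t / (s^2 + t^2)) * ψ2 (s, t) := integral_neg _
      _ = - ∫ p : ℝ × ℝ, (p.2 / (p.1^2 + p.2^2)) * ψ2 p := by
          rw [← integral_prod _ hK2]; rfl
  -- the polar computation
  have hPolar : (∫ p : ℝ × ℝ, ((p.1 / (p.1^2 + p.2^2)) * ψ1 p + (p.2 / (p.1^2 + p.2^2)) * ψ2 p))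
      = -(2 * π * ψ (0, 0)) := by
    rw [← integral_comp_polarCoord_symm]
    set W : ℝ × ℝ → ℝ := fun q =>
      ψ1 (q.1 * Real.cos q.2, q.1 * Real.sin q.2) * Real.cos q.2 +
      ψ2 (q.1 * Real.cos q.2, q.1 * Real.sin q.2) * Real.sin q.2 with hW
    have hstep : ∀ q ∈ polarCoord.target,
        q.1 • ((fun p : ℝ × ℝ => (p.1 / (p.1^2 + p.2^2)) * ψ1 p +
          (p.2 / (p.1^2 + p.2^2)) * ψ2 p) (polarCoord.symm q)) = W q := by
      rintro ⟨r, θ⟩ ⟨hr, hθ⟩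
      have hr' : (0:ℝ) < r := hr
      simp only [polarCoord_symm_apply, smul_eq_mul, hW]
      have hsum : (r * Real.cos θ)^2 + (r * Real.sin θ)^2 = r^2 := by
        have := Real.sin_sq_add_cos_sq θ; nlinarith
      rw [hsum]
      field_simp
    rw [setIntegral_congr_fun polarCoord.open_target.measurableSet hstep]
    rw [polarCoord_target, MeasureTheory.Measure.volume_eq_prod, ← Measure.prod_restrict]
    -- integrability of W on the rectangle
    obtain ⟨M1, hM1⟩ := hψ1s.exists_bound_of_continuous hψ1c.continuous
    obtain ⟨M2, hM2⟩ := hψ2s.exists_bound_of_continuous hψ2c.continuous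
    obtain ⟨R1, hR10, hR1⟩ := exists_euclid_radius hψ1s
    obtain ⟨R2, hR20, hR2⟩ := exists_euclid_radius hψ2s
    have hWc : Continuous W := by
      have hc : Continuous (fun q : ℝ × ℝ => (q.1 * Real.cos q.2, q.1 * Real.sin q.2)) := by
        fun_prop
      exact ((hψ1c.continuous.comp hc).mul (Real.continuous_cos.comp continuous_snd)).add
        ((hψ2c.continuous.comp hc).mul (Real.continuous_sin.comp continuous_snd))
    have hWb : ∀ q : ℝ × ℝ, |W q| ≤ M1 + M2 := by
      intro q
      have h1 := hM1 (q.1 * Real.cos q.2, q.1 * Real.sin q.2)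
      have h2 := hM2 (q.1 * Real.cos q.2, q.1 * Real.sin q.2)
      rw [Real.norm_eq_abs] at h1 h2
      have hc := abs_cos_le_one q.2
      have hs := abs_sin_le_one q.2
      calc |W q| ≤ |ψ1 (q.1 * Real.cos q.2, q.1 * Real.sin q.2) * Real.cos q.2| +
            |ψ2 (q.1 * Real.cos q.2, q.1 * Real.sin q.2) * Real.sin q.2| := abs_add_le _ _
        _ ≤ M1 + M2 := by
            rw [abs_mul, abs_mul]
            have e1 : |ψ1 (q.1 * Real.cos q.2, q.1 * Real.sin q.2)| * |Real.cos q.2| ≤ M1 := by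
              nlinarith [abs_nonneg (ψ1 (q.1 * Real.cos q.2, q.1 * Real.sin q.2)),
                abs_nonneg (Real.cos q.2)]
            have e2 : |ψ2 (q.1 * Real.cos q.2, q.1 * Real.sin q.2)| * |Real.sin q.2| ≤ M2 := by
              nlinarith [abs_nonneg (ψ2 (q.1 * Real.cos q.2, q.1 * Real.sin q.2)),
                abs_nonneg (Real.sin q.2)]
            linarith
    have hWv : ∀ q : ℝ × ℝ, max R1 R2 < q.1 → W q = 0 := by
      intro q hq
      have hq0 : (0:ℝ) < q.1 := lt_trans (lt_of_lt_of_le hR10 (le_max_left R1 R2)) hq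
      have hs := polar_sqrt q.1 q.2 hq0.le
      have h1 := hR1 (q.1 * Real.cos q.2, q.1 * Real.sin q.2)
        (by rw [hs]; exact lt_of_le_of_lt (le_max_left _ _) hq)
      have h2 := hR2 (q.1 * Real.cos q.2, q.1 * Real.sin q.2)
        (by rw [hs]; exact lt_of_le_of_lt (le_max_right _ _) hq)
      rw [hW]
      simp only [h1, h2, zero_mul, add_zero]
    have hWint : IntegrableOn W (Set.Ioi (0:ℝ) ×ˢ Set.Ioo (-π) π) :=
      integrableOn_rect hWc (max R1 R2) (M1 + M2)
        (lt_of_lt_of_le hR10 (le_max_left R1 R2)) hWb hWv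
    rw [integral_prod_symm _ (by rwa [Measure.prod_restrict])]
    have hinner : ∀ θ : ℝ, (∫ r in Set.Ioi (0:ℝ), W (r, θ)) = -ψ (0, 0) := fun θ =>
      ray_integral hψ hψs θ
    rw [setIntegral_congr_fun measurableSet_Ioo (fun θ _ => hinner θ)]
    rw [setIntegral_const, Real.volume_real_Ioo_of_le (by linarith [Real.pi_pos] : -π ≤ π)]
    rw [smul_eq_mul]
    ring
  have h00 : ψ (0, 0) = φ 0 := by
    show φ (eqE (0, 0)) = φ 0
    congr 1
    exact map_zero (eqE : (ℝ × ℝ) ≃L[ℝ] EuclideanSpace ℝ (Fin 2))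
  rw [hsplit, hT1, hT2, ← neg_add, ← integral_add hK1 hK2, hPolar, neg_neg, h00]
end

section
/- Let f : ℂ → ℂ be smooth and compactly supported, and define u : ℂ → ℂ by u(z) = (1/π) ∫_ℂ f(w)/(z - w) dA(w), where dA is Lebesgue measure on ℂ. Then for every z ∈ ℂ, u is real-differentiable at z and (∂u/∂z̄)(z) = f(z), where ∂/∂z̄ = (1/2)(∂/∂x + i·∂/∂y). That is, convolution with the Cauchy kernel 1/(πz) inverts the operator ∂/∂z̄ (the rigorous content of the claim that (∂₋)⁻¹ is given by the kernel 1/(2πz)). -/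
open MeasureTheory Complex

section CauchyKernelAux

open Set
open scoped Real Convolution

noncomputable def pmap : ℂ → ℂ := fun w => (w.re : ℂ) * Complex.exp (w.im * Complex.I)

noncomputable def pder (w : ℂ) : ℂ →L[ℝ] ℂ :=
  (Complex.reCLM.smulRight (Complex.exp (w.im * Complex.I))) +
    (Complex.imCLM.smulRight (Complex.exp (w.im * Complex.I) * ((w.re : ℂ) * Complex.I)))

lemma hasFDerivAt_pmap (w : ℂ) : HasFDerivAt pmap (pder w) w := by
  have h1 : HasFDerivAt (fun w : ℂ => (w.re : ℂ)) (Complex.ofRealCLM.comp Complex.reCLM) w :=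
    (Complex.ofRealCLM.comp Complex.reCLM).hasFDerivAt
  have hin : HasFDerivAt (fun w : ℂ => (w.im : ℂ) * Complex.I)
      (Complex.I • (Complex.ofRealCLM.comp Complex.imCLM)) w := by
    simpa using ((Complex.ofRealCLM.comp Complex.imCLM).hasFDerivAt (x := w)).mul_const Complex.I
  have h2 : HasFDerivAt (fun w : ℂ => Complex.exp (w.im * Complex.I))
      ((Complex.exp (w.im * Complex.I)) • (Complex.I • (Complex.ofRealCLM.comp Complex.imCLM))) w := by
    have := (Complex.hasDerivAt_exp ((w.im : ℂ) * Complex.I)).comp_hasFDerivAt w hin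
    exact this
  have := h1.mul h2
  refine this.congr_fderiv ?_
  ext x
  simp [pder, ContinuousLinearMap.smul_apply, smul_eq_mul]
  ring

lemma pder_det (w : ℂ) : (pder w).det = w.re := by
  have : LinearMap.toMatrix Complex.basisOneI Complex.basisOneI (pder w).toLinearMap =
      !![Real.cos w.im, w.re * (-Real.sin w.im); Real.sin w.im, w.re * Real.cos w.im] := by
    ext i j
    rw [LinearMap.toMatrix_apply]
    fin_cases i <;> fin_cases j <;>
      simp [pder, Complex.exp_mul_I, smul_eq_mul, Complex.cos_ofReal_re, Complex.sin_ofReal_re,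
        ← Complex.ofReal_cos, ← Complex.ofReal_sin] <;> ring
  rw [ContinuousLinearMap.det, ← LinearMap.det_toMatrix Complex.basisOneI, this,
    Matrix.det_fin_two_of]
  linear_combination w.re * (Real.sin_sq_add_cos_sq w.im)

lemma pmap_abs (w : ℂ) : ‖pmap w‖ = |w.re| := by
  simp [pmap, Complex.norm_exp]

lemma continuous_pmap : Continuous pmap := by unfold pmap; fun_prop

lemma integrableOn_inv_ball (R : ℝ) :
    IntegrableOn (fun w : ℂ => w⁻¹) (Metric.ball 0 R) volume := by
  set s : Set ℂ := Complex.re ⁻¹' Ioo 0 R ∩ Complex.im ⁻¹' Ioo (-π) π with hs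
  have hsm : MeasurableSet s :=
    (measurable_re measurableSet_Ioo).inter (measurable_im measurableSet_Ioo)
  have hinj : InjOn pmap s := by
    rintro w hw w' hw' h
    have hr : w.re = w'.re := by
      have := congrArg (‖·‖) h
      rw [pmap_abs, pmap_abs, abs_of_pos hw.1.1, abs_of_pos hw'.1.1] at this
      exact this
    have harg : w.im = w'.im := by
      have h1 : Complex.arg (pmap w) = w.im := by
        have := Complex.arg_mul_cos_add_sin_mul_I hw.1.1 ⟨hw.2.1, hw.2.2.le⟩
        rw [pmap, Complex.exp_mul_I]
        push_cast at this ⊢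
        exact this
      have h2 : Complex.arg (pmap w') = w'.im := by
        have := Complex.arg_mul_cos_add_sin_mul_I hw'.1.1 ⟨hw'.2.1, hw'.2.2.le⟩
        rw [pmap, Complex.exp_mul_I]
        push_cast at this ⊢
        exact this
      rw [← h1, ← h2, h]
    exact Complex.ext hr harg
  have himg : Metric.ball (0:ℂ) R \ {w : ℂ | w.im = 0} ⊆ pmap '' s := by
    rintro z ⟨hz, hz0⟩
    have hz0' : z ≠ 0 := fun h => hz0 (by simp [h])
    refine ⟨(‖z‖ : ℂ) + Complex.arg z * Complex.I, ?_, ?_⟩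
    · have hre : ((‖z‖ : ℂ) + (Complex.arg z : ℂ) * Complex.I).re = ‖z‖ := by
        simp
      have him : ((‖z‖ : ℂ) + (Complex.arg z : ℂ) * Complex.I).im = Complex.arg z := by
        simp
      constructor
      · rw [mem_preimage, hre]
        exact ⟨norm_pos_iff.mpr hz0', by simpa [Complex.dist_eq] using hz⟩
      · rw [mem_preimage, him]
        have h1 : Complex.arg z ≠ π := fun h => hz0 (Complex.arg_eq_pi_iff.mp h).2
        exact ⟨Complex.neg_pi_lt_arg z, lt_of_le_of_ne (Complex.arg_le_pi z) h1⟩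
    · have hre : ((‖z‖ : ℂ) + (Complex.arg z : ℂ) * Complex.I).re = ‖z‖ := by
        simp
      have him : ((‖z‖ : ℂ) + (Complex.arg z : ℂ) * Complex.I).im = Complex.arg z := by
        simp
      show (((‖z‖ : ℂ) + (Complex.arg z : ℂ) * Complex.I).re : ℂ) *
        Complex.exp (((‖z‖ : ℂ) + (Complex.arg z : ℂ) * Complex.I).im * Complex.I) = z
      rw [hre, him]
      exact Complex.norm_mul_exp_arg_mul_I z
  have hline : volume {w : ℂ | w.im = 0} = 0 := by
    have heq : {w : ℂ | w.im = 0} = (LinearMap.ker Complex.imLm : Set ℂ) := by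
      ext w; simp [LinearMap.mem_ker, Complex.imLm]
    rw [heq]
    apply Measure.addHaar_submodule
    intro h
    have hI : Complex.I ∈ LinearMap.ker Complex.imLm := by rw [h]; trivial
    simp [LinearMap.mem_ker] at hI
  have hbd : Bornology.IsBounded s := by
    apply Bornology.IsBounded.subset (Metric.isBounded_ball (x := (0:ℂ)) (r := R + π + 1))
    rintro w ⟨h1, h2⟩
    simp only [mem_preimage, mem_Ioo] at h1 h2
    rw [Metric.mem_ball, Complex.dist_eq, sub_zero]
    have him : |w.im| < π := abs_lt.mpr ⟨h2.1, h2.2⟩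
    calc ‖w‖ ≤ |w.re| + |w.im| := Complex.norm_le_abs_re_add_abs_im w
      _ < R + π + 1 := by rw [abs_of_pos h1.1]; linarith [h1.2]
  have hii : IntegrableOn (fun w : ℂ => w⁻¹) (pmap '' s) volume := by
    rw [integrableOn_image_iff_integrableOn_abs_det_fderiv_smul volume hsm
      (fun x _ => (hasFDerivAt_pmap x).hasFDerivWithinAt) hinj]
    simp only [pder_det]
    refine Integrable.mono' (g := fun _ => (1:ℝ))
      (integrableOn_const hbd.measure_lt_top.ne) ?_ ?_
    · exact ((measurable_re.abs).aemeasurable.aestronglyMeasurable.smul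
        (continuous_pmap.measurable.inv.aemeasurable.aestronglyMeasurable)).restrict
    · rw [ae_restrict_iff' hsm]
      filter_upwards with x hx
      have hn : ‖(pmap x)⁻¹‖ = |x.re|⁻¹ := by rw [norm_inv, pmap_abs]
      rw [norm_smul, Real.norm_eq_abs, _root_.abs_abs, hn,
        mul_inv_cancel₀ (ne_of_gt (abs_pos.mpr (ne_of_gt hx.1.1)))]
  have hsub : Metric.ball (0:ℂ) R ⊆ (pmap '' s) ∪ {w : ℂ | w.im = 0} := by
    intro z hz
    by_cases h : z.im = 0
    · exact Or.inr h
    · exact Or.inl (himg ⟨hz, h⟩)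
  refine (IntegrableOn.union hii ?_).mono_set hsub
  rw [IntegrableOn, Measure.restrict_eq_zero.mpr hline]
  exact integrable_zero_measure

lemma locallyIntegrable_inv : LocallyIntegrable (fun w : ℂ => w⁻¹) volume := by
  intro x
  refine ⟨Metric.ball x 1, Metric.ball_mem_nhds x one_pos, ?_⟩
  refine (integrableOn_inv_ball (‖x‖ + 1)).mono_set (fun w hw => ?_)
  rw [Metric.mem_ball] at hw ⊢
  calc dist w 0 ≤ dist w x + dist x 0 := dist_triangle w x 0
    _ < ‖x‖ + 1 := by rw [dist_zero_right]; linarith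

lemma key (f : ℂ → ℂ) (hf : ContDiff ℝ (⊤ : ℕ∞) f) (hsupp : HasCompactSupport f) (z : ℂ) :
    ∫ w : ℂ, (fderiv ℝ f w 1 + Complex.I * fderiv ℝ f w Complex.I) * (z - w)⁻¹
      = 2 * (π : ℂ) * f z := by
  have hfd : Differentiable ℝ f := hf.differentiable (by simp)
  have hfc : Continuous (fderiv ℝ f) := hf.continuous_fderiv (by simp)
  obtain ⟨R', hR'⟩ :=
    (hsupp.isCompact.union (hsupp.fderiv (𝕜 := ℝ)).isCompact).isBounded.subset_closedBall 0
  set R : ℝ := max R' 0 with hRdef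
  have hR : tsupport f ∪ tsupport (fderiv ℝ f) ⊆ Metric.closedBall 0 R :=
    hR'.trans (Metric.closedBall_subset_closedBall (le_max_left _ _))
  have hf0 : ∀ p : ℂ, R < ‖p‖ → f p = 0 := fun p hp =>
    image_eq_zero_of_notMem_tsupport fun hmem =>
      absurd (mem_closedBall_zero_iff.mp (hR (Or.inl hmem))) (not_le.mpr hp)
  have hD0 : ∀ p : ℂ, R < ‖p‖ → fderiv ℝ f p = 0 := fun p hp =>
    image_eq_zero_of_notMem_tsupport fun hmem =>
      absurd (mem_closedBall_zero_iff.mp (hR (Or.inr hmem))) (not_le.mpr hp)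
  set M : ℝ := ‖z‖ + R + 1 with hMdef
  have hnorm : ∀ r θ : ℝ, M < r → R < ‖z - ↑r * Complex.exp (↑θ * Complex.I)‖ := by
    intro r θ hr
    have hr0 : 0 < r := by
      have : (0:ℝ) ≤ ‖z‖ + R := add_nonneg (norm_nonneg z) (le_max_right R' 0)
      linarith
    have h1 : ‖(↑r * Complex.exp (↑θ * Complex.I) : ℂ)‖ = r := by
      rw [norm_mul, Complex.norm_real, Real.norm_eq_abs,
        Complex.norm_exp_ofReal_mul_I, mul_one, abs_of_pos hr0]
    have h2 : ‖(↑r * Complex.exp (↑θ * Complex.I) : ℂ)‖ - ‖z‖ ≤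
        ‖z - ↑r * Complex.exp (↑θ * Complex.I)‖ := by
      rw [norm_sub_rev]; exact norm_sub_norm_le _ _
    rw [h1] at h2; linarith
  have hf0M : ∀ r θ : ℝ, M < r → f (z - ↑r * Complex.exp (↑θ * Complex.I)) = 0 :=
    fun r θ hr => hf0 _ (hnorm r θ hr)
  have hD0M : ∀ r θ : ℝ, M < r → fderiv ℝ f (z - ↑r * Complex.exp (↑θ * Complex.I)) = 0 :=
    fun r θ hr => hD0 _ (hnorm r θ hr)
  -- auxiliary integrability
  have haux : ∀ c : ℝ × ℝ → ℂ, Continuous c →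
      IntegrableOn (fun p : ℝ × ℝ =>
          fderiv ℝ f (z - ↑p.1 * Complex.exp (↑p.2 * Complex.I)) (c p))
        (Ioi (0:ℝ) ×ˢ Ioo (-π) π) volume := by
    intro c hc
    set φ : ℝ × ℝ → ℂ := fun p =>
      fderiv ℝ f (z - ↑p.1 * Complex.exp (↑p.2 * Complex.I)) (c p) with hφdef
    have hφ : Continuous φ := by
      apply Continuous.clm_apply _ hc
      exact hfc.comp (by fun_prop)
    have hvan : ∀ p : ℝ × ℝ, M < p.1 → φ p = 0 := by
      intro p hp; simp [hφdef, hD0M p.1 p.2 hp]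
    have hsub : Ioi (0:ℝ) ×ˢ Ioo (-π) π ⊆
        (Ioc 0 M ×ˢ Ioo (-π) π) ∪ (Ioi M ×ˢ Ioo (-π) π) := by
      rintro ⟨r, θ⟩ ⟨hr, hθ⟩
      by_cases h : r ≤ M
      · exact Or.inl ⟨⟨hr, h⟩, hθ⟩
      · exact Or.inr ⟨lt_of_not_ge h, hθ⟩
    refine IntegrableOn.mono_set (IntegrableOn.union ?_ ?_) hsub
    · exact (hφ.continuousOn.integrableOn_compact (isCompact_Icc.prod isCompact_Icc)).mono_set
        (prod_mono Ioc_subset_Icc_self Ioo_subset_Icc_self)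
    · rw [integrableOn_congr_fun (g := fun _ => 0) (fun p hp => hvan p hp.1)
        (measurableSet_Ioi.prod measurableSet_Ioo)]
      exact integrableOn_zero
  set A : ℝ × ℝ → ℂ := fun p =>
    fderiv ℝ f (z - ↑p.1 * Complex.exp (↑p.2 * Complex.I)) (Complex.exp (↑p.2 * Complex.I))
    with hAdef
  set B : ℝ × ℝ → ℂ := fun p =>
    fderiv ℝ f (z - ↑p.1 * Complex.exp (↑p.2 * Complex.I))
      (Complex.exp (↑p.2 * Complex.I) * Complex.I) with hBdef
  have hA : IntegrableOn A (Ioi (0:ℝ) ×ˢ Ioo (-π) π) volume := haux _ (by fun_prop)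
  have hB : IntegrableOn B (Ioi (0:ℝ) ×ˢ Ioo (-π) π) volume := haux _ (by fun_prop)
  -- step 1: reflect
  have h1 : (∫ w : ℂ, (fderiv ℝ f w 1 + Complex.I * fderiv ℝ f w Complex.I) * (z - w)⁻¹)
      = ∫ w : ℂ, (fderiv ℝ f (z - w) 1 + Complex.I * fderiv ℝ f (z - w) Complex.I) * w⁻¹ := by
    rw [← integral_sub_left_eq_self
      (fun w => (fderiv ℝ f w 1 + Complex.I * fderiv ℝ f w Complex.I) * (z - w)⁻¹) volume z]
    simp only [sub_sub_cancel]
  rw [h1, ← Complex.integral_comp_polarCoord_symm]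
  -- step 2: pointwise identity on the target
  have hcongr : ∀ p ∈ polarCoord.target,
      p.1 • ((fderiv ℝ f (z - Complex.polarCoord.symm p) 1 +
        Complex.I * fderiv ℝ f (z - Complex.polarCoord.symm p) Complex.I) *
          (Complex.polarCoord.symm p)⁻¹) = A p + Complex.I * B p := by
    rintro ⟨r, θ⟩ ⟨hr, hθ⟩
    have hr0 : (0:ℝ) < r := hr
    have hsymm : Complex.polarCoord.symm (r, θ) = ↑r * Complex.exp (↑θ * Complex.I) := by
      rw [Complex.polarCoord_symm_apply, Complex.exp_mul_I]; push_cast; ring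
    set q : ℂ := z - ↑r * Complex.exp (↑θ * Complex.I) with hq
    set a : ℂ := fderiv ℝ f q 1 with ha
    set b : ℂ := fderiv ℝ f q Complex.I with hb
    have hAB : A (r, θ) = (Real.cos θ) • a + (Real.sin θ) • b := by
      rw [hAdef]
      have hE : Complex.exp ((θ:ℂ) * Complex.I) =
          (Real.cos θ) • (1:ℂ) + (Real.sin θ) • Complex.I := by
        rw [Complex.exp_mul_I]
        simp [Complex.real_smul, ← Complex.ofReal_cos, ← Complex.ofReal_sin]
      show fderiv ℝ f q (Complex.exp ((θ:ℂ) * Complex.I)) = _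
      rw [hE, map_add, ContinuousLinearMap.map_smul, ContinuousLinearMap.map_smul]
    have hBB : B (r, θ) = (-Real.sin θ) • a + (Real.cos θ) • b := by
      rw [hBdef]
      have hE : Complex.exp ((θ:ℂ) * Complex.I) * Complex.I =
          (-Real.sin θ) • (1:ℂ) + (Real.cos θ) • Complex.I := by
        rw [Complex.exp_mul_I]
        simp only [Complex.real_smul]
        push_cast
        linear_combination (Complex.sin (θ:ℂ)) * Complex.I_sq
      show fderiv ℝ f q (Complex.exp ((θ:ℂ) * Complex.I) * Complex.I) = _
      rw [hE, map_add, ContinuousLinearMap.map_smul, ContinuousLinearMap.map_smul]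
    rw [hsymm, hAB, hBB]
    show (r:ℝ) • ((a + Complex.I * b) * (↑r * Complex.exp (↑θ * Complex.I))⁻¹) = _
    have hEinv : (Complex.exp ((θ:ℂ) * Complex.I))⁻¹ =
        ((Real.cos θ : ℂ)) - (Real.sin θ : ℂ) * Complex.I := by
      rw [Complex.exp_mul_I, inv_eq_of_mul_eq_one_right]
      push_cast
      linear_combination (Complex.cos_sq_add_sin_sq (θ:ℂ)) - ((Complex.sin (θ:ℂ))^2) * Complex.I_sq
    rw [mul_inv, Complex.real_smul]
    rw [show ((r:ℂ)) * ((a + Complex.I * b) * (((r:ℂ))⁻¹ * (Complex.exp ((θ:ℂ) * Complex.I))⁻¹))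
      = ((r:ℂ) * (r:ℂ)⁻¹) * ((a + Complex.I * b) * (Complex.exp ((θ:ℂ) * Complex.I))⁻¹) by ring]
    rw [mul_inv_cancel₀ (by exact_mod_cast ne_of_gt hr0), one_mul, hEinv]
    simp only [Complex.real_smul]
    push_cast
    linear_combination (-(Complex.sin (θ:ℂ)) * b) * Complex.I_sq
  rw [polarCoord_target] at hcongr ⊢
  rw [setIntegral_congr_fun (measurableSet_Ioi.prod measurableSet_Ioo) hcongr]
  rw [integral_add hA (hB.const_mul Complex.I), integral_const_mul]
  -- radial part
  have hTA : ∫ p in Ioi (0:ℝ) ×ˢ Ioo (-π) π, A p = (2*π : ℝ) • f z := by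
    rw [Measure.volume_eq_prod, ← Measure.prod_restrict, integral_prod_symm]
    swap
    · rw [Measure.prod_restrict, ← Measure.volume_eq_prod]; exact hA
    have hinner : ∀ θ ∈ Ioo (-π) π, (∫ r in Ioi (0:ℝ), A (r, θ)) = f z := by
      intro θ _
      set E : ℂ := Complex.exp (↑θ * Complex.I) with hE
      set g : ℝ → ℂ := fun r => -f (z - ↑r * E) with hg
      have hinnerD : ∀ r : ℝ, HasDerivAt (fun r : ℝ => z - ↑r * E) (-E) r := by
        intro r
        have h0 : HasDerivAt (fun r : ℝ => (r : ℂ)) 1 r := by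
          exact Complex.ofRealCLM.hasDerivAt (x := r)
        simpa using (h0.mul_const E).const_sub z
      have hder : ∀ r : ℝ, HasDerivAt g (A (r, θ)) r := by
        intro r
        have := ((hfd _).hasFDerivAt.comp_hasDerivAt r (hinnerD r)).neg
        refine this.congr_deriv ?_
        rw [hAdef]; simp [hE]
      have hcontA : Continuous (fun r => A (r, θ)) := by
        simp only [hAdef]
        exact Continuous.clm_apply (hfc.comp (by fun_prop)) continuous_const
      have hAint : IntegrableOn (fun r => A (r, θ)) (Ioi (0:ℝ)) volume := by
        have hsub : Ioi (0:ℝ) ⊆ Ioc 0 M ∪ Ioi M := by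
          intro r hr
          by_cases h : r ≤ M
          · exact Or.inl ⟨hr, h⟩
          · exact Or.inr (lt_of_not_ge h)
        refine IntegrableOn.mono_set (IntegrableOn.union ?_ ?_) hsub
        · exact (hcontA.continuousOn.integrableOn_compact isCompact_Icc).mono_set
            Ioc_subset_Icc_self
        · rw [integrableOn_congr_fun (g := fun _ => 0)
            (fun r hr => by simp [hAdef, hD0M r θ hr]) measurableSet_Ioi]
          exact integrableOn_zero
      have htend : Filter.Tendsto g Filter.atTop (nhds 0) := by
        apply Filter.Tendsto.congr' _ tendsto_const_nhds
        filter_upwards [Filter.eventually_gt_atTop M] with r hr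
        rw [hg]; simp [hE, hf0M r θ hr]
      have hFTC : ∫ r in Ioi (0:ℝ), A (r, θ) = 0 - g 0 :=
        integral_Ioi_of_hasDerivAt_of_tendsto
          (hder 0).continuousAt.continuousWithinAt (fun r _ => hder r) hAint htend
      rw [hFTC, hg]; simp
    rw [setIntegral_congr_fun measurableSet_Ioo hinner, setIntegral_const, measureReal_def, Real.volume_Ioo]
    congr 1
    rw [ENNReal.toReal_ofReal (by linarith [Real.pi_pos])]
    ring
  -- angular part
  have hTB : ∫ p in Ioi (0:ℝ) ×ˢ Ioo (-π) π, B p = 0 := by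
    rw [Measure.volume_eq_prod, ← Measure.prod_restrict, integral_prod]
    swap
    · rw [Measure.prod_restrict, ← Measure.volume_eq_prod]; exact hB
    have hinner : ∀ r ∈ Ioi (0:ℝ), (∫ θ in Ioo (-π) π, B (r, θ)) = 0 := by
      intro r hr
      have hr0 : (0:ℝ) < r := hr
      set ψ : ℝ → ℂ := fun θ => (-(r⁻¹)) • f (z - ↑r * Complex.exp (↑θ * Complex.I)) with hψ
      have hder : ∀ θ : ℝ, HasDerivAt ψ (B (r, θ)) θ := by
        intro θ
        have h0 : HasDerivAt (fun θ : ℝ => (θ : ℂ)) 1 θ := by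
          exact Complex.ofRealCLM.hasDerivAt (x := θ)
        have hE : HasDerivAt (fun θ : ℝ => Complex.exp (↑θ * Complex.I))
            (Complex.exp (↑θ * Complex.I) * Complex.I) θ := by
          simpa using (h0.mul_const Complex.I).cexp
        have hin : HasDerivAt (fun θ : ℝ => z - ↑r * Complex.exp (↑θ * Complex.I))
            (-(↑r * (Complex.exp (↑θ * Complex.I) * Complex.I))) θ := by
          simpa using ((hE.const_mul (r:ℂ))).const_sub z
        have := (((hfd _).hasFDerivAt.comp_hasDerivAt θ hin)).const_smul (-(r⁻¹))
        refine this.congr_deriv ?_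
        have harg : -(↑r * (Complex.exp (↑θ * Complex.I) * Complex.I)) =
            (-r) • (Complex.exp (↑θ * Complex.I) * Complex.I) := by
          simp [Complex.real_smul]
        rw [harg, ContinuousLinearMap.map_smul, hBdef, smul_smul,
          show -r⁻¹ * -r = 1 by field_simp]
        simp
      have hcontB : Continuous (fun θ => B (r, θ)) := by
        simp only [hBdef]
        exact Continuous.clm_apply (hfc.comp (by fun_prop)) (by fun_prop)
      have hle : -π ≤ π := by linarith [Real.pi_pos]
      rw [← integral_Ioc_eq_integral_Ioo, ← intervalIntegral.integral_of_le hle,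
        intervalIntegral.integral_eq_sub_of_hasDerivAt (fun θ _ => hder θ)
          (hcontB.intervalIntegrable _ _)]
      have hexp : Complex.exp (↑(π:ℝ) * Complex.I) = Complex.exp (↑(-π:ℝ) * Complex.I) := by
        push_cast
        rw [Complex.exp_pi_mul_I, neg_mul, Complex.exp_neg, Complex.exp_pi_mul_I]
        norm_num
      rw [hψ]
      simp only [hexp]
      rw [sub_self]
    rw [setIntegral_congr_fun measurableSet_Ioi hinner]
    simp
  rw [hTA, hTB, mul_zero, add_zero, Complex.real_smul]
  push_cast
  ring

end CauchyKernelAux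

section
open scoped Real Convolution
open Set

theorem cauchy_kernel_inverts_dbar
    (f : ℂ → ℂ) (hf : ContDiff ℝ (⊤ : ℕ∞) f) (hsupp : HasCompactSupport f)
    (u : ℂ → ℂ)
    (hu : ∀ z : ℂ, u z = (1 / (Real.pi : ℂ)) * ∫ w : ℂ, f w / (z - w)) :
    ∀ z : ℂ, DifferentiableAt ℝ u z ∧
      (1 / 2 : ℂ) * (deriv (fun t : ℝ => u (z + (t : ℂ))) 0 +
        Complex.I * deriv (fun t : ℝ => u (z + (t : ℂ) * Complex.I)) 0) = f z := by
  intro z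
  set L : ℂ →L[ℝ] ℂ →L[ℝ] ℂ := ContinuousLinearMap.mul ℝ ℂ with hL
  set k : ℂ → ℂ := fun w => w⁻¹ with hk
  have hki : LocallyIntegrable k volume := locallyIntegrable_inv
  have hfc : Continuous (fderiv ℝ f) := hf.continuous_fderiv (by simp)
  have hu' : u = fun x => ((π : ℂ))⁻¹ • (f ⋆[L, volume] k) x := by
    funext x
    rw [hu x, convolution_def]
    simp only [hL, ContinuousLinearMap.mul_apply', hk, smul_eq_mul, one_div, div_eq_mul_inv]
    rw [one_mul]
  have hf1 : ContDiff ℝ 1 f := hf.of_le (by simp)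
  have hD := hsupp.hasFDerivAt_convolution_left L hf1 hki z
  set D : ℂ →L[ℝ] ℂ := (fderiv ℝ f ⋆[L.precompL ℂ, volume] k) z with hDdef
  have hu_deriv : HasFDerivAt u ((π:ℂ)⁻¹ • D) z := by
    rw [hu']
    exact hD.const_smul ((π:ℂ)⁻¹)
  refine ⟨hu_deriv.differentiableAt, ?_⟩
  -- directional derivatives
  have hcast : HasDerivAt (fun t : ℝ => (t : ℂ)) 1 0 := by
    exact Complex.ofRealCLM.hasDerivAt (x := (0:ℝ))
  have h1 : deriv (fun t : ℝ => u (z + (t : ℂ))) 0 = ((π:ℂ)⁻¹ • D) 1 := by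
    have hin : HasDerivAt (fun t : ℝ => z + (t : ℂ)) 1 0 := hcast.const_add z
    have hud : HasFDerivAt u ((π:ℂ)⁻¹ • D) (z + ((0:ℝ) : ℂ)) := by simpa using hu_deriv
    exact (hud.comp_hasDerivAt 0 hin).deriv
  have h2 : deriv (fun t : ℝ => u (z + (t : ℂ) * Complex.I)) 0 = ((π:ℂ)⁻¹ • D) Complex.I := by
    have hin : HasDerivAt (fun t : ℝ => z + (t : ℂ) * Complex.I) Complex.I 0 := by
      simpa using (hcast.mul_const Complex.I).const_add z
    have hud : HasFDerivAt u ((π:ℂ)⁻¹ • D) (z + ((0:ℝ) : ℂ) * Complex.I) := by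
      simpa using hu_deriv
    exact (hud.comp_hasDerivAt 0 hin).deriv
  -- value of D at v
  have hDv : ∀ v : ℂ, D v = ∫ t : ℂ, fderiv ℝ f t v * (z - t)⁻¹ := by
    intro v
    have hint : Integrable (fun t => (L.precompL ℂ) (fderiv ℝ f t) (k (z - t))) volume :=
      (hsupp.fderiv (𝕜 := ℝ)).convolutionExists_left (L.precompL ℂ) hfc hki z
    rw [hDdef, convolution_def, ContinuousLinearMap.integral_apply hint v]
    apply integral_congr_ae
    filter_upwards with t
    simp [hL, ContinuousLinearMap.precompL_apply, ContinuousLinearMap.mul_apply', hk]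
  have hintv : ∀ v : ℂ, Integrable (fun t : ℂ => fderiv ℝ f t v * (z - t)⁻¹) volume := by
    intro v
    have hcs : HasCompactSupport (fun t => fderiv ℝ f t v) :=
      (hsupp.fderiv (𝕜 := ℝ)).comp_left (g := fun T : ℂ →L[ℝ] ℂ => T v) (by simp)
    have hcont : Continuous (fun t => fderiv ℝ f t v) := hfc.clm_apply continuous_const
    exact hcs.convolutionExists_left L hcont hki z
  have hsplit : (∫ t : ℂ, (fderiv ℝ f t 1 + Complex.I * fderiv ℝ f t Complex.I) * (z - t)⁻¹)
      = (∫ t : ℂ, fderiv ℝ f t 1 * (z - t)⁻¹)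
        + Complex.I * ∫ t : ℂ, fderiv ℝ f t Complex.I * (z - t)⁻¹ := by
    rw [← integral_const_mul, ← integral_add (hintv 1) ((hintv Complex.I).const_mul Complex.I)]
    apply integral_congr_ae
    filter_upwards with t
    ring
  have hkey := key f hf hsupp z
  rw [hsplit] at hkey
  rw [h1, h2]
  simp only [ContinuousLinearMap.smul_apply, smul_eq_mul, hDv]
  rw [show (1/2:ℂ) * ((π:ℂ)⁻¹ * (∫ t : ℂ, fderiv ℝ f t 1 * (z - t)⁻¹)
      + Complex.I * ((π:ℂ)⁻¹ * ∫ t : ℂ, fderiv ℝ f t Complex.I * (z - t)⁻¹))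
    = (π:ℂ)⁻¹ * 2⁻¹ * ((∫ t : ℂ, fderiv ℝ f t 1 * (z - t)⁻¹)
      + Complex.I * ∫ t : ℂ, fderiv ℝ f t Complex.I * (z - t)⁻¹) from by ring, hkey]
  have hπ : (π : ℂ) ≠ 0 := Complex.ofReal_ne_zero.mpr Real.pi_ne_zero
  field_simp

end
end
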